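/- arXiv:1907.00513 — 8 statements merged into one kernel-verified Lean document; each statement's English description precedes it below -/
import Mathlib

section
/- Let t and m be positive integers and let G be a finite group of order t·m. For each positive integer k, let χ_G(k) denote the number of elements of order k in G, and for each positive integer d let b_m(d) denote the binomial coefficient C(dm−1, d−1). Then the sum over all divisors d of t of b_m(d)·χ_G(t/d) is congruent to 0 modulo t. -/
/-!
Let `G` act by left multiplication on its `t`-element subsets and apply Burnside's lemma.
A subset is fixed by `g` iff it is a union of orbits of `⟨g⟩`, i.e. of right cosets of size
`k = orderOf g`; hence `g` fixes `C(tm/k, t/k)` subsets when `k ∣ t` and none otherwise.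
Grouping the elements of `G` by their order and writing `k = t/d`, the sum of the fixed-point
counts is `∑_{d ∣ t} χ(t/d) C(dm, d) = m ∑_{d ∣ t} C(dm-1, d-1) χ(t/d)`, while by Burnside it is
the number of orbits times `|G| = tm`. Cancelling `m` gives the divisibility by `t`.
-/

open scoped Classical Pointwise
open MulAction Finset

theorem Finset.natCard_subtype_card_mul_eq {β : Type*} [Finite β] {k : ℕ} (hk : 0 < k) {t : ℕ} :
    Nat.card {T : Finset β // #T * k = t} = if k ∣ t then (Nat.card β).choose (t / k) else 0 := by
  have := Fintype.ofFinite β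
  split_ifs with hkt
  · obtain ⟨c, rfl⟩ := hkt
    rw [Nat.mul_div_cancel_left c hk, Nat.card_eq_fintype_card (α := β),
      ← Fintype.card_finset_len, ← Nat.card_eq_fintype_card]
    exact Nat.card_congr
      (Equiv.subtypeEquivRight fun T => by rw [mul_comm, Nat.mul_left_cancel_iff hk])
  · have : IsEmpty {T : Finset β // #T * k = t} := ⟨fun T => hkt (Dvd.intro_left _ T.2)⟩
    exact Nat.card_of_isEmpty

theorem Nat.choose_mul_eq_mul_choose_pred {d : ℕ} (hd : 0 < d) (m : ℕ) :
    (d * m).choose d = m * (d * m - 1).choose (d - 1) := by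
  rcases Nat.eq_zero_or_pos m with rfl | hm
  · simp [Nat.choose_eq_zero_of_lt hd]
  apply Nat.eq_of_mul_eq_mul_left hd
  have := Nat.add_one_mul_choose_eq (d * m - 1) (d - 1)
  rw [Nat.sub_add_cancel (Nat.mul_pos hd hm), Nat.sub_add_cancel hd] at this
  rw [mul_comm d, this.symm]
  ring

theorem Nat.mul_sum_divisors_choose_pred_eq (f : ℕ → ℕ) {t : ℕ} (ht : t ≠ 0) (m : ℕ) :
    m * ∑ d ∈ t.divisors, (d * m - 1).choose (d - 1) * f (t / d) =
      ∑ k ∈ t.divisors, f k * (t * m / k).choose (t / k) := by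
  rw [← Nat.sum_div_divisors t fun k => f k * (t * m / k).choose (t / k), mul_sum]
  refine sum_congr rfl fun d hd => ?_
  have hdt : d ∣ t := Nat.dvd_of_mem_divisors hd
  rw [Nat.mul_div_right_comm (Nat.div_dvd_of_dvd hdt), Nat.div_div_self hdt ht,
    Nat.choose_mul_eq_mul_choose_pred (Nat.pos_of_mem_divisors hd)]
  ring

namespace MulAction

theorem fixedBy_eq_fixedPoints_zpowers {G X : Type*} [Group G] [MulAction G X] (g : G) :
    fixedBy X g = fixedPoints (Subgroup.zpowers g) X := by
  ext x
  rw [mem_fixedPoints, Subgroup.forall_zpowers, ← mem_fixedBy_zpowers_iff_mem_fixedBy]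
  rfl

theorem sum_natCard_fixedBy_eq_natCard_orbits_mul {G X : Type*} [Group G] [MulAction G X]
    [Fintype G] [Finite X] :
    ∑ g : G, Nat.card (fixedBy X g) = Nat.card (orbitRel.Quotient G X) * Nat.card G := by
  have := Fintype.ofFinite X
  simp only [Nat.card_eq_fintype_card]
  exact sum_card_fixedBy_eq_card_orbits_mul_card_group G X

variable {H α : Type*} [Group H] [MulAction H α]

theorem mk_smul_eq_mk (h : H) (a : α) :
    (Quotient.mk'' (h • a) : orbitRel.Quotient H α) = Quotient.mk'' a :=
  Quotient.sound (mem_orbit a h)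

variable (H) in
theorem card_orbit_of_isCancelSMul [IsCancelSMul H α] (a : α) :
    Nat.card (orbit H a) = Nat.card H := by
  rw [Nat.card_coe_set_eq, ← index_stabilizer, IsCancelSMul.stabilizer_eq_bot,
    Subgroup.index_bot]

theorem card_orbitRel_quotient_mul_card_of_isCancelSMul [IsCancelSMul H α] :
    Nat.card (orbitRel.Quotient H α) * Nat.card H = Nat.card α := by
  rw [← Nat.card_prod]
  exact (Nat.card_congr (selfEquivOrbitsQuotientProd IsCancelSMul.stabilizer_eq_bot)).symm

theorem mem_fixedPoints_powersetCard_iff {t : ℕ} {s : Set.powersetCard α t} :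
    s ∈ fixedPoints H (Set.powersetCard α t) ↔ (s : Finset α) ∈ fixedPoints H (Finset α) := by
  simp only [mem_fixedPoints, Subtype.ext_iff, Set.powersetCard.coe_smul]

section Fintype

variable [Fintype α]

theorem card_filter_mk_eq [IsCancelSMul H α] (ω : orbitRel.Quotient H α) :
    #{a | Quotient.mk'' a = ω} = Nat.card H := by
  rw [← Fintype.card_subtype, ← Nat.card_eq_fintype_card,
    ← card_orbit_of_isCancelSMul H ω.out, ← orbitRel.Quotient.orbit_eq_orbit_out ω Quotient.out_eq']
  exact Nat.card_congr (Equiv.subtypeEquivRight fun a => orbitRel.Quotient.mem_orbit.symm)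

theorem card_filter_mk_mem [IsCancelSMul H α] (T : Finset (orbitRel.Quotient H α)) :
    #{a | Quotient.mk'' a ∈ T} = #T * Nat.card H := by
  rw [card_eq_sum_card_fiberwise (f := Quotient.mk'') (s := {a | Quotient.mk'' a ∈ T}) (t := T)
    fun a ha => (mem_filter.mp ha).2, ← smul_eq_mul, ← sum_const]
  refine sum_congr rfl fun ω hω => ?_
  rw [filter_filter, ← card_filter_mk_eq ω]
  congr 1
  exact filter_congr fun a _ => ⟨And.right, fun h => ⟨h ▸ hω, h⟩⟩

theorem filter_mk_mem_image_eq {S : Finset α} (hS : S ∈ fixedPoints H (Finset α)) :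
    ({a | Quotient.mk'' a ∈ S.image (Quotient.mk'' : α → orbitRel.Quotient H α)} : Finset α) =
      S := by
  ext a
  simp only [mem_filter, mem_univ, true_and, mem_image]
  refine ⟨?_, fun ha => ⟨a, ha, rfl⟩⟩
  rintro ⟨b, hb, hba⟩
  obtain ⟨h, rfl⟩ := orbitRel_apply.mp (Quotient.exact hba.symm)
  rw [← hS h]
  exact smul_mem_smul_finset hb

theorem filter_mk_mem_mem_fixedPoints (T : Finset (orbitRel.Quotient H α)) :
    ({a | Quotient.mk'' a ∈ T} : Finset α) ∈ fixedPoints H (Finset α) := by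
  intro h
  ext a
  rw [mem_smul_finset]
  simp only [mem_filter, mem_univ, true_and]
  refine ⟨?_, fun ha => ⟨h⁻¹ • a, by rwa [mk_smul_eq_mk], smul_inv_smul h a⟩⟩
  rintro ⟨b, hb, rfl⟩
  rwa [mk_smul_eq_mk]

/-- An `H`-invariant finset is the union of the orbits it meets. -/
noncomputable def fixedPointsFinsetEquiv :
    fixedPoints H (Finset α) ≃ Finset (orbitRel.Quotient H α) where
  toFun S := S.1.image Quotient.mk''
  invFun T := ⟨({a | Quotient.mk'' a ∈ T} : Finset α), filter_mk_mem_mem_fixedPoints T⟩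
  left_inv S := Subtype.ext (filter_mk_mem_image_eq S.2)
  right_inv T := by
    ext ω
    simp only [mem_image, mem_filter, mem_univ, true_and]
    refine ⟨?_, fun hω => ⟨ω.out, by rwa [Quotient.out_eq'], Quotient.out_eq' ω⟩⟩
    rintro ⟨a, ha, rfl⟩
    exact ha

noncomputable def fixedPointsPowersetCardEquiv [IsCancelSMul H α] (t : ℕ) :
    fixedPoints H (Set.powersetCard α t) ≃
      {T : Finset (orbitRel.Quotient H α) // #T * Nat.card H = t} :=
  (show fixedPoints H (Set.powersetCard α t) ≃ {S : fixedPoints H (Finset α) // #S.1 = t} from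
    { toFun s := ⟨⟨s.1.1, mem_fixedPoints_powersetCard_iff.mp s.2⟩, s.1.2⟩
      invFun S := ⟨⟨S.1.1, S.2⟩, mem_fixedPoints_powersetCard_iff.mpr S.1.2⟩ }).trans <|
    fixedPointsFinsetEquiv.subtypeEquiv fun S => by
      conv_lhs => rw [← filter_mk_mem_image_eq S.2, card_filter_mk_mem]
      rfl

theorem card_fixedPoints_powersetCard [Finite H] [IsCancelSMul H α] (t : ℕ) :
    Nat.card (fixedPoints H (Set.powersetCard α t)) =
      if Nat.card H ∣ t then (Nat.card (orbitRel.Quotient H α)).choose (t / Nat.card H)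
      else 0 := by
  rw [Nat.card_congr (fixedPointsPowersetCardEquiv t),
    Finset.natCard_subtype_card_mul_eq Nat.card_pos]

end Fintype

end MulAction

theorem card_fixedBy_powersetCard_self {G : Type*} [Group G] [Finite G] (g : G) (t : ℕ) :
    Nat.card (fixedBy (Set.powersetCard G t) g) =
      if orderOf g ∣ t then (Nat.card G / orderOf g).choose (t / orderOf g) else 0 := by
  have := Fintype.ofFinite G
  rw [fixedBy_eq_fixedPoints_zpowers]
  refine (card_fixedPoints_powersetCard (H := Subgroup.zpowers g) (α := G) t).trans ?_
  rw [Nat.card_zpowers,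
    ← card_orbitRel_quotient_mul_card_of_isCancelSMul (H := Subgroup.zpowers g) (α := G),
    Nat.card_zpowers, Nat.mul_div_cancel _ (orderOf_pos g)]

theorem sum_card_fixedBy_powersetCard_self {G : Type*} [Group G] [Fintype G] {t : ℕ}
    (ht : t ≠ 0) :
    ∑ g : G, Nat.card (fixedBy (Set.powersetCard G t) g) =
      ∑ k ∈ t.divisors, #{g : G | orderOf g = k} * (Nat.card G / k).choose (t / k) := by
  simp_rw [card_fixedBy_powersetCard_self]
  rw [← sum_filter, ← sum_fiberwise_of_maps_to (g := orderOf) (t := t.divisors)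
    fun g hg => Nat.mem_divisors.mpr ⟨(mem_filter.mp hg).2, ht⟩]
  refine sum_congr rfl fun k hk => ?_
  rw [sum_congr rfl fun g hg => by rw [(mem_filter.mp hg).2], sum_const, smul_eq_mul,
    filter_filter]
  congr 2
  exact filter_congr fun g _ => and_iff_right_of_imp fun h => h ▸ Nat.dvd_of_mem_divisors hk

/-- For positive integers `t, m` and a finite group `G` of order `t * m`,
`∑_{d ∣ t} C(dm-1, d-1) * χ_G(t/d) ≡ 0 (mod t)`, where `χ_G(k)` is the number of
elements of order `k` in `G`. -/
theorem stmt0 (t m : ℕ) (ht : 0 < t) (hm : 0 < m) (G : Type*) [Group G] [Fintype G]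
    (hG : Fintype.card G = t * m) :
    t ∣ ∑ d ∈ t.divisors,
      (d * m - 1).choose (d - 1) *
        (Finset.univ.filter fun g : G => orderOf g = t / d).card := by
  have hcard : Nat.card G = t * m := by rw [Nat.card_eq_fintype_card, hG]
  have burnside := sum_natCard_fixedBy_eq_natCard_orbits_mul (G := G) (X := Set.powersetCard G t)
  rw [sum_card_fixedBy_powersetCard_self ht.ne', hcard,
    ← Nat.mul_sum_divisors_choose_pred_eq (fun k => #{g : G | orderOf g = k}) ht.ne'] at burnside
  exact ⟨_, Nat.eq_of_mul_eq_mul_left hm (by rw [burnside]; ring)⟩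
end

section
/- Let t, m be positive integers and G a group of order t·m acting on X = {T ⊆ G : |T| = t} by left multiplication. If g ∈ G has order dividing t, say order t/d, then the number of fixed points of g in X equals C(dm, d) = C(dm−1, d−1)·m; and if the order of g does not divide t then g has no fixed points in X. -/
open scoped Classical

/-!
A finset `T` satisfies `g • T = T` iff it is stable under `⟨g⟩`, i.e. iff it is a union of
orbits of `⟨g⟩` acting by left multiplication (the right cosets `⟨g⟩x`). These orbits all have
`orderOf g` elements, so a fixed `t`-set is the union of exactly `t / orderOf g` of the
`t * m / orderOf g` cosets, and no fixed `t`-set exists when `orderOf g ∤ t`.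
-/

open Finset MulAction
open scoped Pointwise

section EqualFibers

variable {α β : Type*} [Fintype α] [DecidableEq β] {f : α → β} {k : ℕ}

theorem card_filter_mem_eq_card_mul (hf : ∀ b, #{a | f a = b} = k) (S : Finset β) :
    #{a | f a ∈ S} = #S * k := by
  rw [← sum_card_fiberwise_eq_card_filter, sum_congr rfl fun b _ => hf b, sum_const, smul_eq_mul]

theorem filter_mem_injective (hf : Function.Surjective f) :
    Function.Injective fun S : Finset β => ({a | f a ∈ S} : Finset α) := by
  intro S S' h
  ext b
  obtain ⟨a, rfl⟩ := hf b
  simpa using congrArg (a ∈ ·) h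

theorem card_filter_card_eq_and_exists_filter_mem [DecidableEq α] [Fintype β]
    (hf : ∀ b, #{a | f a = b} = k) (hk : 0 < k) (t : ℕ) :
    #{T : Finset α | #T = t ∧ ∃ S : Finset β, ({a | f a ∈ S} : Finset α) = T} =
      #{S : Finset β | #S * k = t} := by
  have hsurj : Function.Surjective f := fun b => by
    obtain ⟨a, ha⟩ := card_pos.1 (hf b ▸ hk)
    exact ⟨a, (mem_filter.1 ha).2⟩
  rw [← card_image_of_injective _ (filter_mem_injective hsurj)]
  congr 1
  ext T
  simp only [mem_filter, mem_univ, true_and, mem_image]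
  constructor
  · rintro ⟨rfl, S, rfl⟩
    exact ⟨S, (card_filter_mem_eq_card_mul hf S).symm, rfl⟩
  · rintro ⟨S, rfl, rfl⟩
    exact ⟨card_filter_mem_eq_card_mul hf S, S, rfl⟩

end EqualFibers

section Orbits

variable {H α : Type*} [Group H] [MulAction H α] [Fintype α]
  [DecidableEq (orbitRel.Quotient H α)]

local notation "Ω" => orbitRel.Quotient H α

theorem exists_filter_mem_orbitRel_eq_iff (T : Finset α) :
    (∃ S : Finset Ω, ({a | (Quotient.mk _ a : Ω) ∈ S} : Finset α) = T) ↔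
      ∀ h : H, ∀ a ∈ T, h • a ∈ T := by
  constructor
  · rintro ⟨S, rfl⟩ h a ha
    simp only [mem_filter, mem_univ, true_and] at ha ⊢
    rwa [Quotient.sound (mem_orbit a h : h • a ∈ orbit H a)]
  · intro hT
    refine ⟨T.image (Quotient.mk _), ?_⟩
    ext b
    simp only [mem_filter, mem_univ, true_and, mem_image]
    refine ⟨fun ⟨a, ha, hab⟩ => ?_, fun hb => ⟨b, hb, rfl⟩⟩
    obtain ⟨h, rfl⟩ := Quotient.exact hab.symm
    exact hT h a ha

theorem card_filter_orbitRel_mk_eq [DecidableEq α] [Fintype H] [IsCancelSMul H α] (q : Ω) :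
    #{a | (Quotient.mk _ a : Ω) = q} = Fintype.card H := by
  induction q using Quotient.inductionOn with | h b
  have hfiber : ({a | (Quotient.mk _ a : Ω) = Quotient.mk _ b} : Finset α) =
      univ.image fun h : H => h • b := by
    ext a
    simp [Quotient.eq, orbitRel_apply, mem_orbit_iff]
  rw [hfiber, card_image_of_injective _ fun h h' => IsCancelSMul.right_cancel h h' b, card_univ]

end Orbits

theorem image_mul_left_eq_self_iff {G : Type*} [Group G] [DecidableEq G] (g : G) (T : Finset G) :
    T.image (g * ·) = T ↔ ∀ h : Subgroup.zpowers g, ∀ x ∈ T, h • x ∈ T := by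
  change g • T = T ↔ _
  rw [← mem_stabilizer_iff, ← Subgroup.zpowers_le]
  simp only [SetLike.le_def, mem_stabilizer_finset', Subtype.forall, Subgroup.mk_smul]

theorem Nat.choose_mul_eq_choose_pred_mul {d : ℕ} (hd : 0 < d) (m : ℕ) :
    (d * m).choose d = (d * m - 1).choose (d - 1) * m := by
  rcases Nat.eq_zero_or_pos m with rfl | hm
  · simp [Nat.choose_eq_zero_of_lt hd]
  have h := Nat.add_one_mul_choose_eq (d * m - 1) (d - 1)
  rw [Nat.sub_add_cancel (Nat.mul_pos hd hm), Nat.sub_add_cancel hd] at h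
  refine Nat.eq_of_mul_eq_mul_right hd ?_
  rw [← h]
  ring

theorem stmt1_general (t m : ℕ) (ht : 0 < t) (G : Type*) [Group G] [Fintype G]
    (hG : Fintype.card G = t * m) (g : G) :
    (orderOf g ∣ t →
      (Finset.univ.filter fun T : Finset G =>
          T.card = t ∧ T.image (fun x => g * x) = T).card
        = (t / orderOf g * m).choose (t / orderOf g) ∧
      (t / orderOf g * m).choose (t / orderOf g)
        = (t / orderOf g * m - 1).choose (t / orderOf g - 1) * m) ∧
    (¬ orderOf g ∣ t →
      (Finset.univ.filter fun T : Finset G =>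
          T.card = t ∧ T.image (fun x => g * x) = T).card = 0) := by
  set k := orderOf g
  have hk : 0 < k := orderOf_pos g
  set Q := orbitRel.Quotient (Subgroup.zpowers g) G
  let mk : G → Q := Quotient.mk _
  have hfiber (q) : #{x | mk x = q} = k := by
    rw [card_filter_orbitRel_mk_eq, Fintype.card_zpowers]
  have hcount :
      #{T : Finset G | #T = t ∧ T.image (g * ·) = T} = #{S : Finset Q | #S * k = t} := by
    simp_rw [image_mul_left_eq_self_iff, ← exists_filter_mem_orbitRel_eq_iff]
    exact card_filter_card_eq_and_exists_filter_mem hfiber hk t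
  have hcard : t * m = Fintype.card Q * k := by
    simpa [hG] using card_filter_mem_eq_card_mul hfiber univ
  refine ⟨?_, fun hkt => ?_⟩
  · rintro ⟨d, rfl⟩
    have hd : 0 < d := Nat.pos_of_mul_pos_left ht
    rw [Nat.mul_div_cancel_left d hk, hcount]
    have hQ : Fintype.card Q = d * m := by
      refine Nat.eq_of_mul_eq_mul_right hk ?_
      rw [← hcard]
      ring
    have hpowerset : ({S : Finset Q | #S * k = k * d} : Finset _) = powersetCard d univ := by
      ext S
      simp [mul_comm _ k, hk.ne']
    rw [hpowerset, card_powersetCard, card_univ, hQ]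
    exact ⟨rfl, Nat.choose_mul_eq_choose_pred_mul hd m⟩
  · rw [hcount, card_eq_zero, filter_eq_empty_iff]
    exact fun S _ hS => hkt ⟨#S, by rw [← hS, mul_comm]⟩

/-- In a group `G` of order `t * m`, acting on its `t`-element subsets by left
multiplication: if `orderOf g ∣ t`, writing `d = t / orderOf g`, the number of fixed
points of `g` equals `C(dm, d) = C(dm-1, d-1) * m`; if `orderOf g ∤ t`, then `g` has
no fixed points. -/
theorem stmt1 (t m : ℕ) (ht : 0 < t) (hm : 0 < m) (G : Type*) [Group G] [Fintype G]
    (hG : Fintype.card G = t * m) (g : G) :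
    (orderOf g ∣ t →
      (Finset.univ.filter fun T : Finset G =>
          T.card = t ∧ T.image (fun x => g * x) = T).card
        = (t / orderOf g * m).choose (t / orderOf g) ∧
      (t / orderOf g * m).choose (t / orderOf g)
        = (t / orderOf g * m - 1).choose (t / orderOf g - 1) * m) ∧
    (¬ orderOf g ∣ t →
      (Finset.univ.filter fun T : Finset G =>
          T.card = t ∧ T.image (fun x => g * x) = T).card = 0) :=
  stmt1_general t m ht G hG g
end

section
/- Fix a positive integer n, and let R_n = {f : ℕ⁺ → ℤ/n such that for every divisor t of n, f(t) ≡ 0 mod t}, the set of 'special' arithmetic functions mod n. Then R_n is a unitary subring of the Dirichlet convolution ring Ar_n of functions ℕ⁺ → ℤ/n. -/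
/-- The subring of "special" arithmetic functions mod `n`. -/
def specialSubring (n : ℕ) : Subring (ArithmeticFunction (ZMod n)) where
  carrier := {f | ∀ t : ℕ, t ∣ n → (t : ZMod n) ∣ f t}
  one_mem' := by
    intro t ht
    rcases eq_or_ne t 1 with rfl | h
    · simp
    · simp [ArithmeticFunction.one_apply, h]
  mul_mem' := by
    intro f g hf hg t ht
    rw [ArithmeticFunction.mul_apply]
    apply Finset.dvd_sum
    rintro ⟨a, b⟩ hab
    rw [Nat.mem_divisorsAntidiagonal] at hab
    obtain ⟨hab, -⟩ := hab
    have ha : a ∣ n := dvd_trans ⟨b, hab.symm⟩ ht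
    have hb : b ∣ n := dvd_trans ⟨a, by rw [← hab]; ring⟩ ht
    have := mul_dvd_mul (hf a ha) (hg b hb)
    rwa [← Nat.cast_mul, hab] at this
  add_mem' := by
    intro f g hf hg t ht
    simpa using dvd_add (hf t ht) (hg t ht)
  zero_mem' := by
    intro t ht
    simp
  neg_mem' := by
    intro f hf t ht
    show (t : ZMod n) ∣ -(f t); exact (hf t ht).neg_right

/-- The set `R_n` of "special" arithmetic functions mod `n` (those `f` with
`f t ∈ t • (ZMod n)` for every `t ∣ n`) is a unitary subring of the Dirichlet
convolution ring `Ar_n` of functions into `ZMod n`. -/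
theorem stmt3 (n : ℕ) (hn : 0 < n) :
    ∃ S : Subring (ArithmeticFunction (ZMod n)),
      (S : Set (ArithmeticFunction (ZMod n))) =
        {f | ∀ t : ℕ, t ∣ n → (t : ZMod n) ∣ f t} := by
  exact ⟨specialSubring n, rfl⟩
end

section
/- Fix a positive integer n and let R_n be the subring of special arithmetic functions mod n inside the Dirichlet convolution ring Ar_n of functions ℕ⁺ → ℤ/n. If f ∈ R_n is invertible in Ar_n, then its inverse also lies in R_n; that is, R_n* = R_n ∩ Ar_n*. -/
/-- If `f` is a special arithmetic function mod `n` (i.e. `(t : ZMod n) ∣ f t` for all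
`t ∣ n`) and `f` is invertible in the Dirichlet convolution ring, then its inverse is
special as well. -/
theorem stmt4 (n : ℕ) (hn : 0 < n) (f g : ArithmeticFunction (ZMod n))
    (hfg : f * g = 1) (hf : ∀ t : ℕ, t ∣ n → (t : ZMod n) ∣ f t) :
    ∀ t : ℕ, t ∣ n → (t : ZMod n) ∣ g t := by
  have h1 : f 1 * g 1 = 1 := by
    have := congrArg (fun h : ArithmeticFunction (ZMod n) => h 1) hfg
    simpa [ArithmeticFunction.mul_apply] using this
  intro t
  induction t using Nat.strong_induction_on with
  | _ t ih =>
    intro ht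
    have ht0 : t ≠ 0 := by
      rintro rfl
      exact absurd (Nat.eq_zero_of_zero_dvd ht) hn.ne'
    rcases eq_or_ne t 1 with rfl | ht1
    · exact ⟨g 1, by simp⟩
    have hsum : ∑ p ∈ t.divisorsAntidiagonal, f p.1 * g p.2 = 0 := by
      have := congrArg (fun h : ArithmeticFunction (ZMod n) => h t) hfg
      simpa [ArithmeticFunction.mul_apply, ArithmeticFunction.one_apply, ht1] using this
    have hmem : ((1 : ℕ), t) ∈ t.divisorsAntidiagonal := by
      simp [Nat.mem_divisorsAntidiagonal, ht0]
    have hsplit := Finset.add_sum_erase _ (fun p : ℕ × ℕ => f p.1 * g p.2) hmem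
    have hrest : (t : ZMod n) ∣ ∑ p ∈ t.divisorsAntidiagonal.erase (1, t), f p.1 * g p.2 := by
      apply Finset.dvd_sum
      intro p hp
      obtain ⟨hpne, hp'⟩ := Finset.mem_erase.mp hp
      obtain ⟨hmul, -⟩ := (Nat.mem_divisorsAntidiagonal.mp hp')
      have hp1 : p.1 ≠ 1 := by
        rintro h1'
        apply hpne
        have : p.2 = t := by rw [← hmul, h1', one_mul]
        exact Prod.ext h1' this
      have hp2lt : p.2 < t := by
        have hp2pos : 0 < p.2 := Nat.pos_of_ne_zero (by intro h0; rw [h0, mul_zero] at hmul; exact ht0 hmul.symm)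
        have hp1ge : 2 ≤ p.1 := by
          rcases Nat.lt_or_ge p.1 2 with h | h
          · interval_cases h' : p.1 <;> simp_all
          · exact h
        calc p.2 < 2 * p.2 := by omega
          _ ≤ p.1 * p.2 := Nat.mul_le_mul_right _ hp1ge
          _ = t := hmul
      have hd1 : (p.1 : ZMod n) ∣ f p.1 := hf p.1 (dvd_trans ⟨p.2, hmul.symm⟩ ht)
      have hd2 : (p.2 : ZMod n) ∣ g p.2 := ih p.2 hp2lt (dvd_trans ⟨p.1, by rw [mul_comm]; exact hmul.symm⟩ ht)
      have : ((p.1 * p.2 : ℕ) : ZMod n) ∣ f p.1 * g p.2 := by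
        push_cast
        exact mul_dvd_mul hd1 hd2
      rwa [hmul] at this
    have hkey : (t : ZMod n) ∣ f 1 * g t := by
      have : f 1 * g t = - ∑ p ∈ t.divisorsAntidiagonal.erase (1, t), f p.1 * g p.2 := by
        have := hsplit.trans hsum
        linear_combination this
      rw [this]
      exact dvd_neg.mpr hrest
    have : g t = g 1 * (f 1 * g t) := by
      rw [← mul_assoc, mul_comm (g 1), h1, one_mul]
    rw [this]
    exact Dvd.dvd.mul_left hkey (g 1)
end

section
/- Fix a positive integer n. Let E ∈ Ar_n be the constant function 1 and μ the Möbius function reduced mod n. For f, h ∈ Ar_n with f∗E ∈ R_n: if h∗μ ∈ R_n then h∗f ∈ R_n. If moreover f is a unit in Ar_n, then h∗μ ∈ R_n if and only if h∗f ∈ R_n, and h∗E ∈ R_n if and only if h∗f⁻¹ ∈ R_n. -/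
/-!
`R_n` is closed under Dirichlet products: for `a * b = t` with `t ∣ n`, the term `x a * y b`
is divisible by `a * b = t`. It is also closed under inverses: if `u * v = 1` with `u ∈ R_n`,
then for `1 < t ∣ n` the coefficient `u 1 * v t` is minus a sum of such terms involving only
`v b` with `b < t`, and `u 1` is a unit. Since `μ * E = 1`, each of the four functions in the
statement is the product of two members of `R_n`, taken among the hypothesis, `f * E`, and
`f⁻¹ * μ = (f * E)⁻¹`.
-/

/-- Membership in the subring `R_n` of special arithmetic functions mod `n`. -/
def Rn (n : ℕ) (f : ArithmeticFunction (ZMod n)) : Prop :=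
  ∀ t : ℕ, t ∣ n → (t : ZMod n) ∣ f t

/-- The constant function `1` (on positive integers), as an arithmetic function
with values in `ZMod n`. -/
def Efun (n : ℕ) : ArithmeticFunction (ZMod n) :=
  ⟨fun a => if a = 0 then 0 else 1, by simp⟩

/-- The classical Möbius function reduced mod `n`. -/
noncomputable def muMod (n : ℕ) : ArithmeticFunction (ZMod n) :=
  ⟨fun a => ((ArithmeticFunction.moebius a : ℤ) : ZMod n), by simp⟩

lemma muMod_mul_Efun (n : ℕ) : muMod n * Efun n = 1 := by
  have hμ : muMod n = ((ArithmeticFunction.moebius : ArithmeticFunction ℤ) :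
      ArithmeticFunction (ZMod n)) := by
    ext a; simp [muMod]
  have hE : Efun n = ((ArithmeticFunction.zeta : ArithmeticFunction ℕ) :
      ArithmeticFunction (ZMod n)) := by
    ext a; simp [Efun, ArithmeticFunction.zeta_apply]
  rw [hμ, hE, ArithmeticFunction.coe_moebius_mul_coe_zeta]

namespace Rn

variable {n : ℕ}

lemma dvd_mul_term {x y : ArithmeticFunction (ZMod n)} {t : ℕ} {p : ℕ × ℕ}
    (hp : p ∈ t.divisorsAntidiagonal)
    (hx : (p.1 : ZMod n) ∣ x p.1) (hy : (p.2 : ZMod n) ∣ y p.2) :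
    (t : ZMod n) ∣ x p.1 * y p.2 := by
  obtain ⟨hpt, -⟩ := Nat.mem_divisorsAntidiagonal.mp hp
  rw [← hpt, Nat.cast_mul]
  exact mul_dvd_mul hx hy

lemma mul {x y : ArithmeticFunction (ZMod n)} (hx : Rn n x) (hy : Rn n y) :
    Rn n (x * y) := by
  intro t ht
  rw [ArithmeticFunction.mul_apply]
  refine Finset.dvd_sum fun p hp => dvd_mul_term hp ?_ ?_
  · exact hx _ ((Nat.dvd_of_mem_divisors (Nat.fst_mem_divisors_of_mem_antidiagonal hp)).trans ht)
  · exact hy _ ((Nat.dvd_of_mem_divisors (Nat.snd_mem_divisors_of_mem_antidiagonal hp)).trans ht)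

lemma of_mul_eq_one {u v : ArithmeticFunction (ZMod n)} (huv : u * v = 1) (hu : Rn n u) :
    Rn n v := by
  have hu1 : IsUnit (u 1) := by
    refine IsUnit.of_mul_eq_one (v 1) ?_
    simpa using congrArg (· 1) huv
  intro t ht
  induction t using Nat.strong_induction_on with
  | _ t ih =>
  rcases Nat.lt_trichotomy t 1 with ht0 | rfl | ht1
  · simp [Nat.lt_one_iff.mp ht0]
  · simp
  have hmem : (1, t) ∈ t.divisorsAntidiagonal :=
    Nat.mem_divisorsAntidiagonal.mpr ⟨one_mul t, by omega⟩
  have hsum : u 1 * v t + ∑ p ∈ t.divisorsAntidiagonal.erase (1, t), u p.1 * v p.2 = 0 := by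
    rw [Finset.add_sum_erase _ (fun p => u p.1 * v p.2) hmem, ← ArithmeticFunction.mul_apply,
      huv, ArithmeticFunction.one_apply_ne ht1.ne']
  rw [← hu1.dvd_mul_left, eq_neg_of_add_eq_zero_left hsum, dvd_neg]
  refine Finset.dvd_sum fun p hp => ?_
  obtain ⟨hp1t, hp⟩ := Finset.mem_erase.mp hp
  have hpt := (Nat.mem_divisorsAntidiagonal.mp hp).1
  have hd1 := Nat.dvd_of_mem_divisors (Nat.fst_mem_divisors_of_mem_antidiagonal hp)
  have hd2 := Nat.dvd_of_mem_divisors (Nat.snd_mem_divisors_of_mem_antidiagonal hp)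
  have hp2 : p.2 < t := by
    have hp1 : p.1 ≠ 1 := fun h1 => hp1t (Prod.ext h1 (by rw [← hpt, h1, one_mul]))
    have : 1 < p.1 := by
      have := Nat.pos_of_mem_divisors (Nat.fst_mem_divisors_of_mem_antidiagonal hp); omega
    nlinarith
  exact dvd_mul_term hp (hu _ (hd1.trans ht)) (ih _ hp2 (hd2.trans ht))

end Rn

theorem stmt5_general (n : ℕ) (f h : ArithmeticFunction (ZMod n))
    (hfE : Rn n (f * Efun n)) :
    (Rn n (h * muMod n) → Rn n (h * f)) ∧
    (∀ hf : IsUnit f,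
      ((Rn n (h * muMod n) ↔ Rn n (h * f)) ∧
       (Rn n (h * Efun n) ↔
         Rn n (h * ((hf.unit⁻¹ : (ArithmeticFunction (ZMod n))ˣ) :
           ArithmeticFunction (ZMod n)))))) := by
  have hμE := muMod_mul_Efun n
  have forward (hhμ : Rn n (h * muMod n)) : Rn n (h * f) := by
    convert hhμ.mul hfE using 1
    linear_combination (-(h * f)) * hμE
  refine ⟨forward, fun hf => ?_⟩
  set g := ((hf.unit⁻¹ : (ArithmeticFunction (ZMod n))ˣ) : ArithmeticFunction (ZMod n))
  have hfg : f * g = 1 := hf.mul_val_inv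
  have hgμ : Rn n (g * muMod n) :=
    Rn.of_mul_eq_one (u := f * Efun n) (by linear_combination muMod n * Efun n * hfg + hμE) hfE
  refine ⟨⟨forward, fun hhf => ?_⟩, ⟨fun hhE => ?_, fun hhg => ?_⟩⟩
  · convert hhf.mul hgμ using 1
    linear_combination (-(h * muMod n)) * hfg
  · convert hhE.mul hgμ using 1
    linear_combination (-(h * g)) * hμE
  · convert hhg.mul hfE using 1
    linear_combination (-(h * Efun n)) * hfg

/-- Corollary 3.3: for `f, h` arithmetic functions mod `n` with `f ∗ E` special:
(a) `h ∗ μ` special implies `h ∗ f` special; and if `f` is a unit,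
(b) `h ∗ μ` special iff `h ∗ f` special, and (c) `h ∗ E` special iff `h ∗ f⁻¹` special. -/
theorem stmt5 (n : ℕ) (hn : 0 < n) (f h : ArithmeticFunction (ZMod n))
    (hfE : Rn n (f * Efun n)) :
    (Rn n (h * muMod n) → Rn n (h * f)) ∧
    (∀ hf : IsUnit f,
      ((Rn n (h * muMod n) ↔ Rn n (h * f)) ∧
       (Rn n (h * Efun n) ↔
         Rn n (h * ((hf.unit⁻¹ : (ArithmeticFunction (ZMod n))ˣ) :
           ArithmeticFunction (ZMod n)))))) :=
  stmt5_general n f h hfE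
end

section
/- Fix a positive integer n and let h : ℕ⁺ → ℤ. The following are equivalent: (i) for every divisor t of n, Σ_{d∣t} h(d) ≡ 0 mod t; (ii) for every divisor t of n there exists a positive integer m such that Σ_{d∣t} h(d)·C((t/d)·m − 1, (t/d) − 1) ≡ 0 mod t. -/
/-!
Write `b(r) = C(rm - 1, r - 1)`: it is the number of sequences `ZMod r → ℕ` with sum `r(m - 1)`,
hence, for `r ∣ q`, the number of `r`-periodic points of the cyclic shift acting on sequences
`ZMod q → ℕ` with sum `q(m - 1)`. Points of exact period `q` fall into shift orbits of size `q`,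
so Möbius inversion gives `q ∣ (μ * b)(q)`.

Then `∑_{d ∣ t} h(d) b(t/d) = (h * b)(t) = ((h * ζ) * (μ * b))(t)`. In the last convolution the
term `(h * ζ)(t)` has coefficient `(μ * b)(1) = 1`, and every other term `(h * ζ)(a) (μ * b)(t/a)`
with `a < t` is divisible by `a · (t/a) = t` by strong induction on `t`. So (ii) at `t` is
equivalent to (i) at `t`. For (i) ⇒ (ii) take `m = 1`, which makes every `b(r) = 1`.
-/

open Finset Function ArithmeticFunction
open scoped ArithmeticFunction.Moebius ArithmeticFunction.zeta

namespace Cycle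

variable {α : Type*} [DecidableEq α]

theorem mem_toFinset {c : Cycle α} {a : α} : a ∈ c.toFinset ↔ a ∈ c :=
  Quotient.inductionOn' c fun _ ↦ by simp

theorem card_toFinset_of_nodup {c : Cycle α} (hc : c.Nodup) : #c.toFinset = c.length := by
  induction c using Quotient.inductionOn'
  exact List.toFinset_card_of_nodup hc

end Cycle

theorem Finset.card_piAntidiag_univ {ι : Type*} [Fintype ι] [DecidableEq ι] (n : ℕ) :
    #(piAntidiag (univ : Finset ι) n) = (Fintype.card ι + n - 1).choose n := by
  rw [← map_sym_eq_piAntidiag, card_map, sym_univ, card_univ, Sym.card_sym_eq_choose]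

section PeriodicPoints

variable {α : Type*} [DecidableEq α] {f : α → α} {s : Finset α} {n : ℕ}

theorem card_filter_isPeriodicPt_eq_sum (hn : n ≠ 0) :
    #{x ∈ s | IsPeriodicPt f n x} = ∑ d ∈ n.divisors, #{x ∈ s | minimalPeriod f x = d} := by
  rw [card_eq_sum_card_fiberwise (f := minimalPeriod f) fun x hx ↦
    Nat.mem_divisors.2 ⟨(mem_filter.1 hx).2.minimalPeriod_dvd, hn⟩]
  refine sum_congr rfl fun d hd ↦ congrArg card ?_
  ext x
  simp only [mem_filter, isPeriodicPt_iff_minimalPeriod_dvd, and_assoc]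
  exact and_congr_right fun _ ↦ ⟨fun h ↦ h.2, fun h ↦ ⟨h ▸ Nat.dvd_of_mem_divisors hd, h⟩⟩

theorem filter_periodicOrbit_eq_toFinset (hs : Set.MapsTo f s s) {x : α} (hx : x ∈ s)
    (hxp : x ∈ periodicPts f) :
    {y ∈ s | minimalPeriod f y = minimalPeriod f x ∧ periodicOrbit f y = periodicOrbit f x}
      = (periodicOrbit f x).toFinset := by
  ext y
  simp only [mem_filter, Cycle.mem_toFinset]
  constructor
  · rintro ⟨-, hy, hyx⟩
    rw [← hyx]
    exact self_mem_periodicOrbit (minimalPeriod_pos_iff_mem_periodicPts.1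
      (hy ▸ minimalPeriod_pos_of_mem_periodicPts hxp))
  · rw [mem_periodicOrbit_iff hxp]
    rintro ⟨k, rfl⟩
    exact ⟨hs.iterate k hx, minimalPeriod_apply_iterate hxp k,
      periodicOrbit_apply_iterate_eq hxp k⟩

theorem dvd_card_filter_minimalPeriod_eq (hs : Set.MapsTo f s s) (hn : 0 < n) :
    n ∣ #{x ∈ s | minimalPeriod f x = n} := by
  rw [card_eq_sum_card_image (periodicOrbit f)]
  refine dvd_sum fun c hc ↦ ?_
  obtain ⟨x, hx, rfl⟩ := mem_image.1 hc
  rw [mem_filter] at hx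
  rw [filter_filter, ← hx.2, filter_periodicOrbit_eq_toFinset hs hx.1
    (minimalPeriod_pos_iff_mem_periodicPts.1 (hx.2 ▸ hn)),
    Cycle.card_toFinset_of_nodup nodup_periodicOrbit, periodicOrbit_length]

theorem dvd_sum_moebius_mul_card_filter_isPeriodicPt (hs : Set.MapsTo f s s) (hn : 0 < n) :
    (n : ℤ) ∣ ∑ x ∈ n.divisorsAntidiagonal, μ x.1 * (#{y ∈ s | IsPeriodicPt f x.2 y} : ℤ) := by
  have inversion := (sum_eq_iff_sum_mul_moebius_eq
    (f := fun d ↦ (#{x ∈ s | minimalPeriod f x = d} : ℤ))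
    (g := fun d ↦ (#{x ∈ s | IsPeriodicPt f d x} : ℤ))).1
    (fun k hk ↦ by exact_mod_cast (card_filter_isPeriodicPt_eq_sum (s := s) (f := f) hk.ne').symm)
    n hn
  simp only [Int.cast_id] at inversion
  rw [inversion]
  exact_mod_cast dvd_card_filter_minimalPeriod_eq hs hn

end PeriodicPoints

section CyclicShift

variable {q : ℕ} {β : Type*}

def cyclicShift (g : ZMod q → β) : ZMod q → β := fun i ↦ g (i + 1)

theorem iterate_cyclicShift (k : ℕ) (g : ZMod q → β) :
    cyclicShift^[k] g = fun i ↦ g (i + k) := by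
  induction k generalizing g with
  | zero => simp
  | succ k ih =>
    rw [iterate_succ_apply, ih]
    funext i
    simp only [cyclicShift, Nat.cast_succ, add_assoc]

theorem isPeriodicPt_cyclicShift_iff {d : ℕ} {g : ZMod q → β} :
    IsPeriodicPt cyclicShift d g ↔ ∀ i, g (i + d) = g i := by
  rw [IsPeriodicPt, IsFixedPt, iterate_cyclicShift, funext_iff]

theorem mapsTo_cyclicShift_piAntidiag [NeZero q] (N : ℕ) :
    Set.MapsTo cyclicShift (piAntidiag (univ : Finset (ZMod q)) N : Set (ZMod q → ℕ))
      (piAntidiag (univ : Finset (ZMod q)) N : Set (ZMod q → ℕ)) := by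
  intro g hg
  simp only [mem_coe, mem_piAntidiag, mem_univ, implies_true, and_true] at hg ⊢
  rw [← hg]
  exact Fintype.sum_equiv (Equiv.addRight 1) _ _ fun _ ↦ rfl

theorem exists_eq_comp_castHom_of_isPeriodicPt [NeZero q] {d : ℕ} (hdvd : d ∣ q)
    {g : ZMod q → β} (hg : IsPeriodicPt cyclicShift d g) :
    ∃ h : ZMod d → β, g = h ∘ ZMod.castHom hdvd (ZMod d) := by
  refine ⟨fun y ↦ g (y.val : ZMod q), funext fun x ↦ ?_⟩
  have hd : NeZero d := ⟨fun h ↦ NeZero.ne q (Nat.eq_zero_of_zero_dvd (h ▸ hdvd))⟩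
  have period (i : ZMod q) (j : ℕ) : g (i + (d * j : ℕ)) = g i :=
    isPeriodicPt_cyclicShift_iff.1 (hg.mul_const j) i
  rw [comp_apply, ← ZMod.natCast_zmod_val x, map_natCast, ZMod.val_natCast]
  nth_rw 1 [← Nat.mod_add_div x.val d]
  rw [Nat.cast_add, period]

theorem card_filter_castHom_eq [NeZero q] {d : ℕ} [NeZero d] (hdvd : d ∣ q) (y : ZMod d) :
    #{x : ZMod q | ZMod.castHom hdvd (ZMod d) x = y} = q / d := by
  set φ := ZMod.castHom hdvd (ZMod d)
  have fibre (y : ZMod d) : #{x | φ x = y} = #{x | φ x = 0} :=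
    AddMonoidHom.card_fiber_eq_of_mem_range φ (ZMod.castHom_surjective hdvd y) ⟨0, map_zero φ⟩
  have total : q = d * #{x | φ x = 0} := by
    simpa [fibre, ZMod.card] using card_eq_sum_card_fiberwise (f := φ) (s := univ) (t := univ)
      (fun _ _ ↦ mem_coe.2 (mem_univ _))
  rw [fibre]
  exact (Nat.div_eq_of_eq_mul_right (NeZero.pos d) total).symm

theorem sum_comp_castHom [NeZero q] {M : Type*} [AddCommMonoid M] {d : ℕ} [NeZero d]
    (hdvd : d ∣ q) (F : ZMod d → M) :
    ∑ x : ZMod q, F (ZMod.castHom hdvd (ZMod d) x) = (q / d) • ∑ y, F y := by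
  rw [← sum_fiberwise' univ (ZMod.castHom hdvd (ZMod d)) F, smul_sum]
  simp only [sum_const, card_filter_castHom_eq]

theorem filter_isPeriodicPt_cyclicShift_piAntidiag [NeZero q] {d : ℕ} [NeZero d] (hdvd : d ∣ q)
    (k : ℕ) :
    {g ∈ piAntidiag (univ : Finset (ZMod q)) (q * k) | IsPeriodicPt cyclicShift d g} =
      (piAntidiag univ (d * k)).map
        ⟨(· ∘ ZMod.castHom hdvd (ZMod d)),
          (ZMod.castHom_surjective hdvd).injective_comp_right⟩ := by
  have hq : q = q / d * d := (Nat.div_mul_cancel hdvd).symm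
  have sum_comp (h : ZMod d → ℕ) : ∑ x : ZMod q, h (ZMod.castHom hdvd (ZMod d) x) = q * k ↔
      ∑ y, h y = d * k := by
    rw [sum_comp_castHom, smul_eq_mul]
    nth_rw 2 [hq]
    rw [mul_assoc, Nat.mul_right_inj (Nat.div_pos (Nat.le_of_dvd (NeZero.pos q) hdvd)
      (NeZero.pos d)).ne']
  ext g
  simp only [mem_filter, mem_map, mem_piAntidiag, mem_univ, implies_true, and_true,
    Embedding.coeFn_mk]
  constructor
  · rintro ⟨hsum, hg⟩
    obtain ⟨h, rfl⟩ := exists_eq_comp_castHom_of_isPeriodicPt hdvd hg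
    exact ⟨h, (sum_comp h).1 hsum, rfl⟩
  · rintro ⟨h, hsum, rfl⟩
    refine ⟨(sum_comp h).2 hsum, isPeriodicPt_cyclicShift_iff.2 fun i ↦ ?_⟩
    simp only [comp_apply, map_add, map_natCast, ZMod.natCast_self, add_zero]

theorem card_filter_isPeriodicPt_cyclicShift [NeZero q] {d : ℕ} (hdvd : d ∣ q) (k : ℕ) :
    #{g ∈ piAntidiag (univ : Finset (ZMod q)) (q * k) | IsPeriodicPt cyclicShift d g} =
      (d * (k + 1) - 1).choose (d - 1) := by
  have hd : 0 < d := Nat.pos_of_dvd_of_pos hdvd (NeZero.pos q)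
  have : NeZero d := ⟨hd.ne'⟩
  rw [filter_isPeriodicPt_cyclicShift_piAntidiag hdvd, card_map, card_piAntidiag_univ, ZMod.card]
  rw [show d + d * k - 1 = d * k + (d - 1) by omega,
    show d * (k + 1) - 1 = d * k + (d - 1) by rw [Nat.mul_succ]; omega]
  exact Nat.choose_symm_add

theorem dvd_sum_moebius_mul_choose {m : ℕ} (hq : 0 < q) (hm : 0 < m) :
    (q : ℤ) ∣ ∑ x ∈ q.divisorsAntidiagonal, μ x.1 * ((x.2 * m - 1).choose (x.2 - 1) : ℤ) := by
  have : NeZero q := ⟨hq.ne'⟩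
  obtain ⟨k, rfl⟩ : ∃ k, m = k + 1 := ⟨m - 1, (Nat.succ_pred_eq_of_pos hm).symm⟩
  convert dvd_sum_moebius_mul_card_filter_isPeriodicPt
    (mapsTo_cyclicShift_piAntidiag (q := q) (q * k)) hq using 4 with x hx
  rw [card_filter_isPeriodicPt_cyclicShift
    (Nat.dvd_of_mem_divisors (Nat.snd_mem_divisors_of_mem_antidiagonal hx)) k]

end CyclicShift

namespace ArithmeticFunction

def ofFun {R : Type*} [Zero R] (h : ℕ → R) : ArithmeticFunction R :=
  ⟨fun d ↦ if d = 0 then 0 else h d, if_pos rfl⟩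

theorem ofFun_apply {R : Type*} [Zero R] (h : ℕ → R) {d : ℕ} (hd : d ≠ 0) : ofFun h d = h d :=
  if_neg hd

theorem dvd_mul_apply_iff {F D : ArithmeticFunction ℤ} {t : ℕ} (ht : t ≠ 0) (hD₁ : D 1 = 1)
    (hD : ∀ v, v ∣ t → (v : ℤ) ∣ D v) (hF : ∀ a, a ∣ t → a ≠ t → (a : ℤ) ∣ F a) :
    (t : ℤ) ∣ (F * D) t ↔ (t : ℤ) ∣ F t := by
  have hmem : (t, 1) ∈ t.divisorsAntidiagonal := by simp [ht]
  rw [mul_apply, ← add_sum_erase _ _ hmem, hD₁, mul_one, dvd_add_left]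
  refine dvd_sum fun x hx ↦ ?_
  obtain ⟨hne, hx⟩ := mem_erase.1 hx
  obtain ⟨hxt, -⟩ := Nat.mem_divisorsAntidiagonal.1 hx
  have hx₁ : x.1 ≠ t := by
    rintro h
    refine hne (Prod.ext h ?_)
    rw [h] at hxt
    exact (Nat.mul_eq_left ht).1 hxt
  rw [← hxt, Nat.cast_mul]
  exact mul_dvd_mul (hF x.1 (Dvd.intro _ hxt) hx₁) (hD x.2 (Dvd.intro_left _ hxt))

end ArithmeticFunction

theorem dvd_sum_divisors_mul_choose_iff (h : ℕ → ℤ) {t m : ℕ} (ht : t ≠ 0) (hm : 0 < m)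
    (hproper : ∀ a, a ∣ t → a ≠ t → (a : ℤ) ∣ ∑ d ∈ a.divisors, h d) :
    (t : ℤ) ∣ ∑ d ∈ t.divisors, h d * ((t / d * m - 1).choose (t / d - 1) : ℤ) ↔
      (t : ℤ) ∣ ∑ d ∈ t.divisors, h d := by
  set H := ofFun h
  set B := ofFun fun r ↦ ((r * m - 1).choose (r - 1) : ℤ)
  have H_mul_zeta {a : ℕ} (ha : a ≠ 0) : (H * ζ) a = ∑ d ∈ a.divisors, h d :=
    coe_mul_zeta_apply.trans <| sum_congr rfl fun d hd ↦
      ofFun_apply h (Nat.pos_of_mem_divisors hd).ne'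
  have moebius_mul_B {v : ℕ} (hv : v ≠ 0) : (v : ℤ) ∣ (μ * B) v := by
    rw [mul_apply]
    convert dvd_sum_moebius_mul_choose (Nat.pos_of_ne_zero hv) hm using 3 with x hx
    rw [ofFun_apply _ (Nat.right_ne_zero_of_mem_divisorsAntidiagonal hx)]
  have hsum : ∑ d ∈ t.divisors, h d * ((t / d * m - 1).choose (t / d - 1) : ℤ) = (H * B) t := by
    rw [mul_apply, Nat.sum_divisorsAntidiagonal fun a b ↦ H a * B b]
    refine sum_congr rfl fun d hd ↦ ?_
    have hd₀ := Nat.pos_of_mem_divisors hd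
    rw [ofFun_apply h hd₀.ne', ofFun_apply _ (Nat.div_pos (Nat.divisor_le hd) hd₀).ne']
  have factor : H * B = (H * ζ) * (μ * B) := by
    rw [mul_assoc, ← mul_assoc (ζ : ArithmeticFunction ℤ), coe_zeta_mul_moebius, one_mul]
  rw [hsum, factor, dvd_mul_apply_iff ht ?_ ?_ ?_, H_mul_zeta ht]
  · rw [mul_apply, Nat.divisorsAntidiagonal_one, sum_singleton, ofFun_apply _ one_ne_zero]
    simp
  · exact fun v hv ↦ moebius_mul_B (ne_zero_of_dvd_ne_zero ht hv)
  · exact fun a ha hat ↦ H_mul_zeta (ne_zero_of_dvd_ne_zero ht ha) ▸ hproper a ha hat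

theorem stmt7_general (n : ℕ) (h : ℕ → ℤ) :
    (∀ t : ℕ, t ∣ n → (t : ℤ) ∣ ∑ d ∈ t.divisors, h d) ↔
    (∀ t : ℕ, t ∣ n → ∃ m : ℕ, 0 < m ∧
      (t : ℤ) ∣ ∑ d ∈ t.divisors, h d * ((t / d * m - 1).choose (t / d - 1) : ℤ)) := by
  refine ⟨fun H t htn ↦ ⟨1, one_pos, by simpa using H t htn⟩, fun H t ↦ ?_⟩
  induction t using Nat.strong_induction_on with
  | _ t IH =>
    intro htn
    rcases eq_or_ne t 0 with rfl | ht
    · simp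
    obtain ⟨m, hm, hdvd⟩ := H t htn
    refine (dvd_sum_divisors_mul_choose_iff h ht hm fun a hat hne ↦ ?_).1 hdvd
    exact IH a (lt_of_le_of_ne (Nat.le_of_dvd (Nat.pos_of_ne_zero ht) hat) hne) (hat.trans htn)

/-- For `h : ℕ → ℤ` and `n > 0`, the following are equivalent:
(i) for every `t ∣ n`, `t ∣ ∑_{d ∣ t} h d`;
(ii) for every `t ∣ n` there is `m > 0` with `t ∣ ∑_{d ∣ t} h d * C((t/d)m - 1, t/d - 1)`. -/
theorem stmt7 (n : ℕ) (hn : 0 < n) (h : ℕ → ℤ) :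
    (∀ t : ℕ, t ∣ n → (t : ℤ) ∣ ∑ d ∈ t.divisors, h d) ↔
    (∀ t : ℕ, t ∣ n → ∃ m : ℕ, 0 < m ∧
      (t : ℤ) ∣ ∑ d ∈ t.divisors, h d * ((t / d * m - 1).choose (t / d - 1) : ℤ)) :=
  stmt7_general n h
end

section
/- Let G be a finite group and p a prime with p^k dividing |G| for some k ≥ 1. Then the number of subgroups of G of order p^k is congruent to 1 mod p. -/
open MulAction Finset
open scoped Pointwise

namespace Stmt11Aux
set_option linter.unusedSectionVars false
variable {G : Type*} [Group G] [Fintype G] [DecidableEq G]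

noncomputable def cosetF (H : Subgroup G) (x : G) : Finset G :=
  ((H : Set G).toFinite.toFinset).image (· * x)

lemma mem_cosetF {H : Subgroup G} {x y : G} : y ∈ cosetF H x ↔ ∃ h ∈ H, h * x = y := by
  simp only [cosetF, Finset.mem_image, Set.Finite.mem_toFinset, SetLike.mem_coe]

lemma self_mem_cosetF (H : Subgroup G) (x : G) : x ∈ cosetF H x :=
  mem_cosetF.mpr ⟨1, H.one_mem, one_mul x⟩

lemma card_cosetF (H : Subgroup G) (x : G) : (cosetF H x).card = Nat.card H := by
  rw [cosetF, Finset.card_image_of_injective _ (mul_left_injective x),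
    ← Set.ncard_eq_toFinset_card _ (Set.toFinite _), ← Nat.card_coe_set_eq,
    SetLike.coe_sort_coe]

lemma cosetF_eq {H : Subgroup G} {x y : G} (h : y ∈ cosetF H x) : cosetF H y = cosetF H x := by
  obtain ⟨h0, hh0, rfl⟩ := mem_cosetF.mp h
  ext z
  simp only [mem_cosetF]
  constructor
  · rintro ⟨h1, hh1, rfl⟩
    exact ⟨h1 * h0, H.mul_mem hh1 hh0, by group⟩
  · rintro ⟨h1, hh1, rfl⟩
    exact ⟨h1 * h0⁻¹, H.mul_mem hh1 (H.inv_mem hh0), by group⟩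

lemma cosetF_stab_subset {S : Finset G} {x : G} (hx : x ∈ S) :
    cosetF (stabilizer G S) x ⊆ S := by
  intro y hy
  obtain ⟨h, hh, rfl⟩ := mem_cosetF.mp hy
  have hS : h • S = S := hh
  rw [← hS, ← smul_eq_mul]
  exact Finset.smul_mem_smul_finset hx

lemma card_stabilizer_dvd (S : Finset G) : Nat.card (stabilizer G S) ∣ S.card := by
  set H := stabilizer G S with hH
  have key : ∀ t ∈ S.image (cosetF H), (S.filter (fun y => cosetF H y = t)).card = Nat.card H := by
    intro t ht
    obtain ⟨x, hx, rfl⟩ := Finset.mem_image.mp ht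
    have hfil : S.filter (fun y => cosetF H y = cosetF H x) = cosetF H x := by
      apply Finset.Subset.antisymm
      · intro y hy
        obtain ⟨hyS, hyc⟩ := Finset.mem_filter.mp hy
        rw [← hyc]
        exact self_mem_cosetF H y
      · intro y hy
        exact Finset.mem_filter.mpr ⟨cosetF_stab_subset hx hy, cosetF_eq hy⟩
    rw [hfil, card_cosetF]
  have htot := Finset.card_eq_sum_card_fiberwise
    (f := cosetF H) (s := S) (t := S.image (cosetF H)) (fun x hx => Finset.mem_image_of_mem _ hx)
  rw [Finset.sum_congr rfl key, Finset.sum_const, smul_eq_mul] at htot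
  exact ⟨_, by rw [htot, mul_comm]⟩

lemma eq_cosetF_of_card_stab {S : Finset G} {x : G} (hx : x ∈ S)
    (h : Nat.card (stabilizer G S) = S.card) : S = cosetF (stabilizer G S) x :=
  (Finset.eq_of_subset_of_card_le (cosetF_stab_subset hx) (by rw [card_cosetF, h])).symm

lemma coe_cosetF_one (H : Subgroup G) : (↑(cosetF H 1) : Set G) = (H : Set G) := by
  ext y
  simp [mem_cosetF]

lemma stabilizer_cosetF_one (H : Subgroup G) : stabilizer G (cosetF H 1) = H := by
  rw [← stabilizer_coe_finset, coe_cosetF_one, stabilizer_subgroup]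

lemma smul_cosetF (H : Subgroup G) (x : G) :
    x⁻¹ • cosetF H x = cosetF (H.map (MulAut.conj x⁻¹).toMonoidHom) 1 := by
  ext y
  simp only [Finset.mem_smul_finset, mem_cosetF, Subgroup.mem_map,
    MulEquiv.coe_toMonoidHom, MulAut.conj_apply, smul_eq_mul]
  constructor
  · rintro ⟨z, ⟨h, hh, rfl⟩, rfl⟩
    exact ⟨x⁻¹ * h * x⁻¹⁻¹, ⟨h, hh, rfl⟩, by group⟩
  · rintro ⟨g, ⟨h, hh, rfl⟩, rfl⟩
    exact ⟨h * x, ⟨h, hh, rfl⟩, by group⟩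

lemma card_map_conj (H : Subgroup G) (x : G) :
    Nat.card (H.map (MulAut.conj x).toMonoidHom) = Nat.card H :=
  (Nat.card_congr (Subgroup.equivMapOfInjective H _ (MulAut.conj x).injective).toEquiv).symm

abbrev Omega (G : Type*) [Group G] [DecidableEq G] (r : ℕ) := {S : Finset G // S.card = r}

noncomputable instance (r : ℕ) : MulAction G (Omega G r) where
  smul a S := ⟨a • S.1, by rw [Finset.card_smul_finset]; exact S.2⟩
  one_smul S := Subtype.ext (one_smul G S.1)
  mul_smul a b S := Subtype.ext (mul_smul a b S.1)

lemma smul_omega_coe {r : ℕ} (a : G) (S : Omega G r) : (a • S).1 = a • S.1 := rfl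

lemma stabilizer_omega {r : ℕ} (S : Omega G r) : stabilizer G S = stabilizer G S.1 := by
  ext a
  simp only [mem_stabilizer_iff, Subtype.ext_iff]
  rfl

lemma card_stab_congr {r : ℕ} {S T : Omega G r}
    (h : (Quotient.mk'' S : Quotient (orbitRel G (Omega G r))) = Quotient.mk'' T) :
    Nat.card (stabilizer G S) = Nat.card (stabilizer G T) :=
  Nat.card_congr (stabilizerEquivStabilizerOfOrbitRel (Quotient.eq''.mp h)).toEquiv

lemma stab_out_mk_card {r : ℕ} (S : Omega G r) :
    Nat.card (stabilizer G ((Quotient.mk'' S : Quotient (orbitRel G (Omega G r))).out)) =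
      Nat.card (stabilizer G S.1) := by
  rw [card_stab_congr (Quotient.out_eq' _), stabilizer_omega]

lemma card_good (r : ℕ) (hr0 : r ≠ 0) :
    Nat.card {H : Subgroup G // Nat.card H = r} =
    Nat.card {ω : Quotient (orbitRel G (Omega G r)) // Nat.card (stabilizer G ω.out) = r} := by
  classical
  apply Nat.card_congr
  refine Equiv.ofBijective
    (f := fun H => ⟨Quotient.mk'' ⟨cosetF H.1 1, by rw [card_cosetF]; exact H.2⟩,
      by rw [stab_out_mk_card, stabilizer_cosetF_one]; exact H.2⟩) ⟨?_, ?_⟩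
  · rintro ⟨H1, h1⟩ ⟨H2, h2⟩ h
    simp only [Subtype.mk.injEq] at h
    obtain ⟨a, ha⟩ := Quotient.eq''.mp h
    have ha' : a • cosetF H2 1 = cosetF H1 1 := congrArg Subtype.val ha
    have h1mem : (1 : G) ∈ a • cosetF H2 1 := by rw [ha']; exact self_mem_cosetF H1 1
    obtain ⟨z, hz, hza⟩ := Finset.mem_smul_finset.mp h1mem
    obtain ⟨h0, hh0, rfl⟩ := mem_cosetF.mp hz
    have haH2 : a ∈ H2 := by
      have e1 : a * h0 = 1 := by simpa using hza
      have e2 : a = h0⁻¹ := eq_inv_of_mul_eq_one_left e1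
      rw [e2]
      exact H2.inv_mem hh0
    have hfix : a • cosetF H2 1 = cosetF H2 1 := by
      have hmem : a ∈ stabilizer G (cosetF H2 1) := by
        rw [stabilizer_cosetF_one]
        exact haH2
      exact hmem
    have hc : cosetF H1 1 = cosetF H2 1 := by rw [← ha', hfix]
    have hset : (H1 : Set G) = (H2 : Set G) := by
      rw [← coe_cosetF_one, hc, coe_cosetF_one]
    exact Subtype.ext (SetLike.coe_injective hset)
  · rintro ⟨ω, hω⟩
    set S := ω.out with hS
    have hS1 : Nat.card (stabilizer G S.1) = r := by rwa [← stabilizer_omega]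
    have hcard : S.1.card = r := S.2
    obtain ⟨x, hx⟩ : S.1.Nonempty :=
      Finset.card_pos.mp (by rw [hcard]; exact Nat.pos_of_ne_zero hr0)
    have hcoset : S.1 = cosetF (stabilizer G S.1) x :=
      eq_cosetF_of_card_stab hx (by rw [hS1, hcard])
    refine ⟨⟨(stabilizer G S.1).map (MulAut.conj x⁻¹).toMonoidHom,
      (card_map_conj _ _).trans hS1⟩, ?_⟩
    apply Subtype.ext
    show Quotient.mk'' _ = ω
    rw [← Quotient.out_eq' ω]
    exact Quotient.sound' ⟨x⁻¹, Subtype.ext ((congrArg (x⁻¹ • ·) hcoset).trans (smul_cosetF _ x))⟩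

theorem frob_count (p k : ℕ) (hp : p.Prime) (hk : 1 ≤ k) (hdvd : p ^ k ∣ Fintype.card G) :
    (Fintype.card G).choose (p ^ k) ≡
      Nat.card {H : Subgroup G // Nat.card H = p ^ k} * (Fintype.card G / p ^ k)
      [MOD p * (Fintype.card G / p ^ k)] := by
  classical
  set n := Fintype.card G with hn
  set r := p ^ k with hr
  set m := n / r with hm
  have hr0 : r ≠ 0 := pow_ne_zero k hp.pos.ne'
  letI : Fintype (Quotient (orbitRel G (Omega G r))) := Quotient.fintype _
  have hQcard := card_eq_sum_card_group_div_card_stabilizer G (Omega G r)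
  have hΩ : Fintype.card (Omega G r) = n.choose r := Fintype.card_finset_len r
  set good : Quotient (orbitRel G (Omega G r)) → Prop :=
    fun ω => Nat.card (stabilizer G ω.out) = r with hgood
  have hchoose : n.choose r =
      ∑ ω : Quotient (orbitRel G (Omega G r)), n / Fintype.card (stabilizer G ω.out) := by
    rw [← hΩ]
    exact hQcard
  rw [← Finset.sum_filter_add_sum_filter_not Finset.univ good] at hchoose
  have hgsum : ∑ ω ∈ Finset.univ.filter good, n / Fintype.card (stabilizer G ω.out)
      = (Finset.univ.filter good).card * m := by
    rw [Finset.sum_congr rfl (fun ω hω => ?_), Finset.sum_const, smul_eq_mul]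
    have hg : good ω := (Finset.mem_filter.mp hω).2
    rw [← Nat.card_eq_fintype_card, hg]
  have hgcard : (Finset.univ.filter good).card = Nat.card {H : Subgroup G // Nat.card H = r} := by
    rw [card_good r hr0, Nat.card_eq_fintype_card, Fintype.card_subtype]
  have hbsum : p * m ∣ ∑ ω ∈ Finset.univ.filter (fun ω => ¬ good ω),
      n / Fintype.card (stabilizer G ω.out) := by
    apply Finset.dvd_sum
    intro ω hω
    have hbad : ¬ good ω := (Finset.mem_filter.mp hω).2
    set d := Nat.card (stabilizer G ω.out) with hd
    have hdvd' : d ∣ r := by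
      have hh := card_stabilizer_dvd (ω.out).1
      rw [(ω.out).2] at hh
      have h1 : d = Nat.card (stabilizer G (ω.out).1) := by rw [hd, stabilizer_omega]
      rw [h1]
      exact hh
    obtain ⟨j, hj, hdeq⟩ := (Nat.dvd_prime_pow hp).mp hdvd'
    have hjk : j < k := by
      refine lt_of_le_of_ne hj ?_
      rintro rfl
      exact hbad (show Nat.card (stabilizer G ω.out) = r from hdeq.trans hr.symm)
    have hd0 : d ≠ 0 := by rw [hdeq]; exact pow_ne_zero _ hp.pos.ne'
    have hmr : m * r = n := Nat.div_mul_cancel hdvd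
    have hpow : p ^ j * p ^ (k - j) = p ^ k := by rw [← pow_add, Nat.add_sub_cancel' hj]
    have hn_eq : n = d * (p ^ (k - j) * m) := by
      rw [← hmr, hdeq, hr, ← hpow]
      ring
    have hnd : n / d = p ^ (k - j) * m := by
      rw [hn_eq, Nat.mul_div_cancel_left _ (Nat.pos_of_ne_zero hd0)]
    have hterm : n / Fintype.card (stabilizer G ω.out) = p ^ (k - j) * m := by
      rw [← Nat.card_eq_fintype_card, ← hd, hnd]
    rw [hterm]
    exact mul_dvd_mul (dvd_pow_self p (Nat.sub_ne_zero_of_lt hjk)) dvd_rfl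
  rw [hgsum, hgcard] at hchoose
  obtain ⟨c, hc⟩ := hbsum
  rw [hc] at hchoose
  rw [hchoose]
  have h0 : p * m * c ≡ 0 [MOD p * m] := Nat.modEq_zero_iff_dvd.mpr ⟨c, rfl⟩
  calc Nat.card {H : Subgroup G // Nat.card H = r} * m + p * m * c
      ≡ Nat.card {H : Subgroup G // Nat.card H = r} * m + 0 [MOD p * m] :=
        (Nat.ModEq.refl _).add h0
    _ = _ := add_zero _

theorem cyclic_count (p k : ℕ) [IsCyclic G] (hp : p.Prime)
    (hdvd : p ^ k ∣ Fintype.card G) :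
    Nat.card {H : Subgroup G // Nat.card H = p ^ k} = 1 := by
  classical
  haveI : Fact p.Prime := ⟨hp⟩
  obtain ⟨H0, hH0⟩ := Sylow.exists_subgroup_card_pow_prime (G := G) p
    (by rw [Nat.card_eq_fintype_card]; exact hdvd)
  rw [Nat.card_eq_one_iff_unique]
  set T : Finset G := Finset.univ.filter (fun b => b ^ (p ^ k) = 1) with hT
  have hTcard : T.card ≤ p ^ k := IsCyclic.card_pow_eq_one_le (pow_pos hp.pos k)
  have key : ∀ (K : Subgroup G), Nat.card K = p ^ k → cosetF K 1 = T := by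
    intro K hK
    apply Finset.eq_of_subset_of_card_le
    · intro y hy
      have hyK : y ∈ K := by
        have := (Set.ext_iff.mp (coe_cosetF_one K) y).mp hy
        exact this
      rw [hT, Finset.mem_filter]
      refine ⟨Finset.mem_univ y, ?_⟩
      have : (⟨y, hyK⟩ : K) ^ (p ^ k) = 1 := by
        rw [← hK]
        exact pow_card_eq_one'
      have := congrArg (Subtype.val) this
      simpa using this
    · rw [card_cosetF, hK]
      exact hTcard
  refine ⟨⟨fun a b => ?_⟩, ⟨⟨H0, hH0⟩⟩⟩
  · obtain ⟨H1, h1⟩ := a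
    obtain ⟨H2, h2⟩ := b
    have : cosetF H1 1 = cosetF H2 1 := (key H1 h1).trans (key H2 h2).symm
    have hset : (H1 : Set G) = (H2 : Set G) := by
      rw [← coe_cosetF_one, this, coe_cosetF_one]
    exact Subtype.ext (SetLike.coe_injective hset)

end Stmt11Aux

/-- Strengthened Sylow theorem: if `p` is prime and `p^k ∣ |G|` with `k ≥ 1`, the
number of subgroups of `G` of order `p^k` is congruent to `1` mod `p`. -/
theorem stmt11 (G : Type*) [Group G] [Fintype G] (p k : ℕ) (hp : p.Prime)
    (hk : 1 ≤ k) (hdvd : p ^ k ∣ Nat.card G) :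
    Nat.card {H : Subgroup G // Nat.card H = p ^ k} ≡ 1 [MOD p] := by
  classical
  have hdvd' : p ^ k ∣ Fintype.card G := by rwa [Nat.card_eq_fintype_card] at hdvd
  set n := Fintype.card G with hn
  set m := n / p ^ k with hm
  have hn0 : n ≠ 0 := Fintype.card_ne_zero
  have hm0 : m ≠ 0 := by
    intro h
    have := Nat.div_mul_cancel hdvd'
    rw [← hm, h, zero_mul] at this
    exact hn0 this.symm
  have h1 := Stmt11Aux.frob_count (G := G) p k hp hk hdvd'
  haveI : NeZero n := ⟨hn0⟩
  have h2 := Stmt11Aux.frob_count (G := Multiplicative (ZMod n)) p k hp hk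
    (by rw [Fintype.card_multiplicative, ZMod.card]; exact hdvd')
  have hcyc := Stmt11Aux.cyclic_count (G := Multiplicative (ZMod n)) p k hp
    (by rw [Fintype.card_multiplicative, ZMod.card]; exact hdvd')
  rw [hcyc, one_mul, Fintype.card_multiplicative, ZMod.card] at h2
  have h3 : Nat.card {H : Subgroup G // Nat.card H = p ^ k} * m ≡ 1 * m [MOD p * m] := by
    rw [one_mul]
    exact h1.symm.trans h2
  exact Nat.ModEq.mul_right_cancel' hm0 h3
end

section
/- Let G be a finite group and F ≤ K ≤ G subgroups. Then φ⁻¹(K,G) = Σ_{H : F ≤ H ≤ G, ⟨H ∪ K⟩ = G} φ⁻¹(F,H)·[G:H], where φ⁻¹ is the convolution inverse of the lattice totient function φ = i∗μ in the incidence algebra of the subgroup lattice of G, and ⟨H ∪ K⟩ denotes the join (subgroup generated by H and K). -/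
/-!
Write `i(H,L) = [L:H]`. The weight `i` is multiplicative along chains, so the twisted Möbius
function `(H,L) ↦ [L:H]·μ(H,L)` is its convolution inverse; since `φ⁻¹(F,·)` sums this inverse
over the interval above `F`, it follows that `∑_{F ≤ H ≤ L} φ⁻¹(F,H)·[G:H] = [G:L]` whenever
`F ≤ L`. Inserting this into `φ⁻¹(K,G) = ∑_{K ≤ L} [G:L]·μ(L,G)` and exchanging the two sums,
the inner sum `∑_{H ⊔ K ≤ L} μ(L,G)` vanishes unless `H ⊔ K = G`.
-/

open scoped Classical

noncomputable instance subgroupFintype (G : Type*) [Group G] [Finite G] :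
    Fintype (Subgroup G) := Fintype.ofFinite _

noncomputable instance subgroupLFO (G : Type*) [Group G] [Finite G] :
    LocallyFiniteOrder (Subgroup G) := Fintype.toLocallyFiniteOrder

/-- The Möbius function of the subgroup lattice of a finite group. -/
noncomputable def muSub (G : Type*) [Group G] [Finite G] :
    Subgroup G → Subgroup G → ℤ :=
  fun H K => IncidenceAlgebra.mu ℤ H K

/-- `φ⁻¹(H,L) = ∑_{H ≤ K ≤ L} [L:K] · μ_G(K,L)`, the convolution inverse of the
lattice totient function. -/
noncomputable def phiInv (G : Type*) [Group G] [Fintype G] (H L : Subgroup G) : ℤ :=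
  ∑ K ∈ Finset.univ.filter (fun K : Subgroup G => H ≤ K ∧ K ≤ L),
    (K.relIndex L : ℤ) * muSub G K L

open Finset

theorem Finset.sum_Icc_sum_Icc_comm {α M : Type*} [Preorder α] [LocallyFiniteOrder α]
    [AddCommMonoid M] (a b : α) (f : α → α → M) :
    ∑ y ∈ Icc a b, ∑ x ∈ Icc a y, f x y = ∑ x ∈ Icc a b, ∑ y ∈ Icc x b, f x y :=
  sum_comm' fun y x => by
    simp only [mem_Icc]
    exact ⟨fun ⟨⟨_, hyb⟩, hax, hxy⟩ => ⟨⟨hxy, hyb⟩, hax, hxy.trans hyb⟩,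
      fun ⟨⟨hxy, hyb⟩, hax, _⟩ => ⟨⟨hax.trans hxy, hyb⟩, hax, hxy⟩⟩

section

variable {G : Type*} [Group G] [Fintype G]

theorem phiInv_eq_sum_Icc (H L : Subgroup G) :
    phiInv G H L = ∑ K ∈ Icc H L, (K.relIndex L : ℤ) * muSub G K L := by
  rw [phiInv]
  congr 1
  ext K
  simp

theorem sum_Icc_relIndex_mul_muSub_mul_relIndex (J L : Subgroup G) :
    ∑ H ∈ Icc J L, (J.relIndex H : ℤ) * muSub G J H * H.relIndex L =
      if J = L then 1 else 0 := by
  calc ∑ H ∈ Icc J L, (J.relIndex H : ℤ) * muSub G J H * H.relIndex L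
      = ∑ H ∈ Icc J L, (J.relIndex L : ℤ) * muSub G J H := by
        refine sum_congr rfl fun H hH => ?_
        rw [mem_Icc] at hH
        rw [← Subgroup.relIndex_mul_relIndex J H L hH.1 hH.2, Nat.cast_mul]
        ring
    _ = if J = L then 1 else 0 := by
        rw [← mul_sum]
        simp only [muSub, IncidenceAlgebra.sum_Icc_mu_right, mul_ite, mul_one, mul_zero]
        split_ifs with hJL
        · rw [hJL, Subgroup.relIndex_self, Nat.cast_one]
        · rfl

theorem sum_Icc_phiInv_mul_relIndex {F L : Subgroup G} (hFL : F ≤ L) :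
    ∑ H ∈ Icc F L, phiInv G F H * H.relIndex L = 1 := by
  simp only [phiInv_eq_sum_Icc, sum_mul]
  rw [sum_Icc_sum_Icc_comm]
  simp only [sum_Icc_relIndex_mul_muSub_mul_relIndex, sum_ite_eq', mem_Icc, hFL, le_refl,
    and_self, if_true]

theorem sum_Icc_phiInv_mul_index {F L : Subgroup G} (hFL : F ≤ L) :
    ∑ H ∈ Icc F L, phiInv G F H * H.index = L.index := by
  calc ∑ H ∈ Icc F L, phiInv G F H * H.index
      = (∑ H ∈ Icc F L, phiInv G F H * H.relIndex L) * L.index := by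
        rw [sum_mul]
        refine sum_congr rfl fun H hH => ?_
        rw [mul_assoc, ← Nat.cast_mul, Subgroup.relIndex_mul_index (mem_Icc.mp hH).2]
    _ = L.index := by rw [sum_Icc_phiInv_mul_relIndex hFL, one_mul]

end

/-- For subgroups `F ≤ K ≤ G`:
`φ⁻¹(K,G) = ∑_{F ≤ H ≤ G, ⟨H,K⟩ = G} φ⁻¹(F,H) · [G:H]`. -/
theorem stmt19 (G : Type*) [Group G] [Fintype G] (F K : Subgroup G) (hFK : F ≤ K) :
    phiInv G K ⊤ =
      ∑ H ∈ Finset.univ.filter (fun H : Subgroup G => F ≤ H ∧ H ⊔ K = ⊤),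
        phiInv G F H * (H.index : ℤ) := by
  calc phiInv G K ⊤ = ∑ L ∈ Icc K ⊤, (L.index : ℤ) * muSub G L ⊤ := by
        simp only [phiInv_eq_sum_Icc, Subgroup.relIndex_top_right]
    _ = ∑ L ∈ Icc K ⊤, ∑ H ∈ Icc F L, phiInv G F H * H.index * muSub G L ⊤ := by
        refine sum_congr rfl fun L hL => ?_
        rw [← sum_mul, sum_Icc_phiInv_mul_index (hFK.trans (mem_Icc.mp hL).1)]
    _ = ∑ H ∈ univ.filter (F ≤ ·), ∑ L ∈ Icc (H ⊔ K) ⊤,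
          phiInv G F H * H.index * muSub G L ⊤ :=
        sum_comm' fun L H => by simp only [mem_Icc, mem_filter, mem_univ, true_and,
          sup_le_iff, le_top, and_true]; tauto
    _ = _ := by
        rw [sum_filter, sum_filter]
        refine sum_congr rfl fun H _ => ?_
        rw [← mul_sum]
        simp only [muSub, IncidenceAlgebra.sum_Icc_mu_left, mul_ite, mul_one, mul_zero]
        by_cases hFH : F ≤ H <;> simp [hFH]
end
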